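/- A strictly positive Bernoulli distribution p on {0,1}^d is palindromic if and only if all its odd-order log-linear interactions vanish, i.e., λ_b := 2^{-d} Σ_{a ∈ {0,1}^d} (-1)^{a·b} log p(a) = 0 for all b with |b| odd. -/
import Mathlib


open Finset

noncomputable def sgn {d : ℕ} (a b : Fin d → Bool) : ℝ :=
  ∏ v : Fin d, (if a v && b v then (-1 : ℝ) else 1)

def wt {d : ℕ} (b : Fin d → Bool) : ℕ :=
  (univ.filter (fun v => b v = true)).card

def bcompl {d : ℕ} (a : Fin d → Bool) : Fin d → Bool := fun v => !a v

/-- Log-linear parameter `λ_b = 2^{-d} Σ_a (-1)^{a·b} log p(a)`. -/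
noncomputable def loglin {d : ℕ} (p : (Fin d → Bool) → ℝ) (b : Fin d → Bool) : ℝ :=
  (2 : ℝ)⁻¹ ^ d * ∑ a : Fin d → Bool, sgn a b * Real.log (p a)

lemma sgn_comm {d : ℕ} (a b : Fin d → Bool) : sgn a b = sgn b a := by
  simp [sgn, Bool.and_comm]

lemma sgn_mul {d : ℕ} (a b c : Fin d → Bool) :
    sgn a b * sgn a c = sgn a (fun v => xor (b v) (c v)) := by
  unfold sgn
  rw [← Finset.prod_mul_distrib]
  refine Finset.prod_congr rfl fun v _ => ?_
  cases ha : a v <;> cases hb : b v <;> cases hc : c v <;> simp [ha, hb, hc]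

lemma sum_sgn {d : ℕ} (c : Fin d → Bool) :
    ∑ b : Fin d → Bool, sgn c b = if c = (fun _ => false) then (2:ℝ)^d else 0 := by
  unfold sgn
  rw [← Fintype.prod_sum (fun v (x : Bool) => if c v && x then (-1:ℝ) else 1)]
  by_cases h : c = fun _ => false
  · simp [h, Finset.card_univ]
  · have hv : ∃ v, c v = true := by
      by_contra h'
      push_neg at h'
      exact h (funext fun v => by simpa using h' v)
    obtain ⟨v, hv⟩ := hv
    rw [if_neg h]
    refine Finset.prod_eq_zero (Finset.mem_univ v) ?_
    simp [hv]

lemma orth {d : ℕ} (a a' : Fin d → Bool) :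
    ∑ b : Fin d → Bool, sgn a b * sgn a' b = if a = a' then (2:ℝ)^d else 0 := by
  have : ∀ b : Fin d → Bool, sgn a b * sgn a' b = sgn (fun v => xor (a v) (a' v)) b := by
    intro b
    rw [sgn_comm a, sgn_comm a', sgn_mul, sgn_comm]
  simp_rw [this, sum_sgn]
  congr 1
  simp only [eq_iff_iff]
  constructor
  · intro h
    funext v
    have := congrFun h v
    cases h1 : a v <;> cases h2 : a' v <;> simp_all
  · intro h; subst h; funext v; simp

lemma inversion {d : ℕ} (p : (Fin d → Bool) → ℝ) (hpos : ∀ a, 0 < p a) (a : Fin d → Bool) :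
    Real.log (p a) = ∑ b : Fin d → Bool, sgn a b * loglin p b := by
  unfold loglin
  have h1 : ∀ b : Fin d → Bool,
      sgn a b * ((2 : ℝ)⁻¹ ^ d * ∑ a' : Fin d → Bool, sgn a' b * Real.log (p a'))
        = (2 : ℝ)⁻¹ ^ d * ∑ a' : Fin d → Bool, sgn a b * sgn a' b * Real.log (p a') := by
    intro b
    rw [mul_left_comm, Finset.mul_sum]
    simp_rw [mul_assoc]
  simp_rw [h1]
  rw [← Finset.mul_sum, Finset.sum_comm]
  have h2 : ∀ a' : Fin d → Bool,
      ∑ b : Fin d → Bool, sgn a b * sgn a' b * Real.log (p a')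
        = (if a = a' then (2:ℝ)^d else 0) * Real.log (p a') := by
    intro a'
    rw [← Finset.sum_mul, orth]
  simp_rw [h2, ite_mul, zero_mul]
  rw [Finset.sum_ite_eq, if_pos (Finset.mem_univ a), ← mul_assoc, ← mul_pow]
  norm_num

lemma sgn_compl {d : ℕ} (a b : Fin d → Bool) :
    sgn (bcompl a) b = (-1:ℝ)^(wt b) * sgn a b := by
  have h : (-1:ℝ)^(wt b) = ∏ v : Fin d, (if b v = true then (-1:ℝ) else 1) := by
    rw [Finset.prod_ite, Finset.prod_const, Finset.prod_const, one_pow, mul_one, wt]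
  rw [h, sgn, sgn]
  simp only [bcompl]
  rw [← Finset.prod_mul_distrib]
  refine Finset.prod_congr rfl fun v _ => ?_
  by_cases ha : a v = true <;> by_cases hb : b v = true <;>
    simp_all

theorem palindromic_iff_odd_loglinear_interactions_vanish {d : ℕ}
    (p : (Fin d → Bool) → ℝ)
    (hpos : ∀ a, 0 < p a)
    (hsum : ∑ a : Fin d → Bool, p a = 1) :
    (∀ a, p a = p (bcompl a)) ↔
      (∀ b : Fin d → Bool, Odd (wt b) → loglin p b = 0) := by
  constructor
  · intro hpal b hodd
    have e : Function.Involutive (bcompl (d := d)) := by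
      intro a; funext v; simp [bcompl]
    have hre : ∑ a : Fin d → Bool, sgn a b * Real.log (p a)
        = ∑ a : Fin d → Bool, sgn (bcompl a) b * Real.log (p (bcompl a)) :=
      (Fintype.sum_equiv e.toPerm _ _ (fun a => rfl)).symm
    have : ∑ a : Fin d → Bool, sgn a b * Real.log (p a)
        = -∑ a : Fin d → Bool, sgn a b * Real.log (p a) := by
      nth_rewrite 1 [hre]
      rw [← Finset.sum_neg_distrib]
      refine Finset.sum_congr rfl fun a _ => ?_
      rw [sgn_compl, ← hpal a, hodd.neg_one_pow]
      ring
    have hz : ∑ a : Fin d → Bool, sgn a b * Real.log (p a) = 0 := by linarith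
    rw [loglin, hz, mul_zero]
  · intro hv a
    have hlog : Real.log (p a) = Real.log (p (bcompl a)) := by
      rw [inversion p hpos, inversion p hpos]
      refine Finset.sum_congr rfl fun b _ => ?_
      rw [sgn_compl]
      rcases Nat.even_or_odd (wt b) with he | ho
      · rw [he.neg_one_pow, one_mul]
      · rw [hv b ho, mul_zero, mul_zero]
    have := congrArg Real.exp hlog
    rwa [Real.exp_log (hpos a), Real.exp_log (hpos (bcompl a))] at this
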